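/- arXiv:2405.08009 — 2 statements merged into one kernel-verified Lean document; each statement's English description precedes it below -/
import Mathlib

section
/- Let (G, ‖·‖) be a Banach space, R : G → G satisfying the interpolative Matkowski condition with comparison function ζ, and let {p_m} be the Picard iteration p_{m+1} = R(p_m) with p_m ≠ p_{m+1} for all m. Then the sequence of consecutive distances is strictly decreasing: ‖p_{m+1} − p_m‖ < ‖p_m − p_{m−1}‖ for all m ≥ 1. -/
/-!
Write `d₀ = dist x (R x)` and `d₁ = dist (R x) (R (R x))`. If `d₀ ≤ d₁`, every factor in the
contraction condition for the pair `(x, R x)` is at most `d₁`: the averaged cross term is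
`½ dist x (R (R x)) ≤ ½ (d₀ + d₁) ≤ d₁`. Since the exponents sum to one, the argument of `ζ` is at
most `d₁`, so `d₁ ≤ ζ d₁ < d₁`.
-/

open Real

def IsInterpolativeMatkowski {X : Type*} [MetricSpace X] (R : X → X) (a b c : ℝ) (ζ : ℝ → ℝ) :
    Prop :=
  ∀ p q, R p ≠ p → R q ≠ q →
    dist (R p) (R q) ≤
      ζ (dist p q ^ b * dist p (R p) ^ a * dist q (R q) ^ c *
        ((1 / 2) * (dist p (R q) + dist q (R p))) ^ (1 - a - b - c))

lemma Real.rpow_mul_rpow_mul_rpow_mul_rpow_le {s t u a b c : ℝ} (hs : 0 ≤ s) (hst : s ≤ t)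
    (ht : 0 < t) (hu : 0 ≤ u) (hut : u ≤ t) (ha : 0 ≤ a) (hb : 0 ≤ b) (habc : a + b + c ≤ 1) :
    s ^ b * s ^ a * t ^ c * u ^ (1 - a - b - c) ≤ t :=
  calc s ^ b * s ^ a * t ^ c * u ^ (1 - a - b - c)
      ≤ t ^ b * t ^ a * t ^ c * t ^ (1 - a - b - c) := by
        gcongr
        linarith
    _ = t := by
        rw [← rpow_add ht, ← rpow_add ht, ← rpow_add ht]
        ring_nf
        exact rpow_one t

theorem IsInterpolativeMatkowski.dist_map_map_lt {X : Type*} [MetricSpace X] {R : X → X}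
    {a b c : ℝ} {ζ : ℝ → ℝ} (hR : IsInterpolativeMatkowski R a b c ζ) (ha : 0 ≤ a) (hb : 0 ≤ b)
    (habc : a + b + c ≤ 1) (hζmono : ∀ s t : ℝ, 0 ≤ s → s ≤ t → ζ s ≤ ζ t)
    (hζlt : ∀ t : ℝ, 0 < t → ζ t < t) {x : X} (hx : R x ≠ x) (hRx : R (R x) ≠ R x) :
    dist (R x) (R (R x)) < dist x (R x) := by
  set d₀ := dist x (R x)
  set d₁ := dist (R x) (R (R x))
  have hd₁ : 0 < d₁ := dist_pos.2 hRx.symm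
  by_contra! hd
  have hcross : (1 / 2) * (dist x (R (R x)) + dist (R x) (R x)) ≤ d₁ := by
    have := dist_triangle x (R x) (R (R x))
    rw [dist_self]
    linarith
  have harg := rpow_mul_rpow_mul_rpow_mul_rpow_le dist_nonneg hd hd₁ (by positivity) hcross ha hb
    habc
  have hζ := hR x (R x) hx hRx
  exact (hζ.trans (hζmono _ _ (by positivity) harg)).not_gt (hζlt d₁ hd₁)

theorem stmt_4_general {G : Type*} [NormedAddCommGroup G]
    (R : G → G) (a b c : ℝ) (ζ : ℝ → ℝ)
    (ha : a ∈ Set.Ioo (0:ℝ) 1) (hb : b ∈ Set.Ioo (0:ℝ) 1)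
    (habc : a + b + c < 1)
    (hζmono : ∀ s t : ℝ, 0 ≤ s → s ≤ t → ζ s ≤ ζ t)
    (hζlt : ∀ t : ℝ, 0 < t → ζ t < t)
    (hR : ∀ p q : G, R p ≠ p → R q ≠ q →
      ‖R p - R q‖ ≤
        ζ (‖p - q‖ ^ b * ‖p - R p‖ ^ a * ‖q - R q‖ ^ c *
          ((1 / 2) * (‖p - R q‖ + ‖q - R p‖)) ^ (1 - a - b - c)))
    (p : ℕ → G) (hp : ∀ m, p (m + 1) = R (p m))
    (hne : ∀ m, p m ≠ p (m + 1)) :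
    ∀ m : ℕ, 1 ≤ m → ‖p (m + 1) - p m‖ < ‖p m - p (m - 1)‖ := by
  have hR' : IsInterpolativeMatkowski R a b c ζ := by
    simpa only [IsInterpolativeMatkowski, dist_eq_norm] using hR
  intro m hm
  obtain ⟨n, rfl⟩ := Nat.exists_eq_add_of_le' hm
  have hpn : R (p n) ≠ p n := by simpa only [hp] using (hne n).symm
  have hpn1 : R (R (p n)) ≠ R (p n) := by simpa only [hp] using (hne (n + 1)).symm
  simpa only [Nat.add_sub_cancel, hp, ← dist_eq_norm, dist_comm (R (R (p n))),
    dist_comm (R (p n)) (p n)] using hR'.dist_map_map_lt ha.1.le hb.1.le habc.le hζmono hζlt hpn hpn1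

theorem stmt_4 {G : Type*} [NormedAddCommGroup G] [NormedSpace ℝ G] [CompleteSpace G]
    (R : G → G) (a b c : ℝ) (ζ : ℝ → ℝ)
    (ha : a ∈ Set.Ioo (0:ℝ) 1) (hb : b ∈ Set.Ioo (0:ℝ) 1) (hc : c ∈ Set.Ioo (0:ℝ) 1)
    (habc : a + b + c < 1)
    (hζmono : ∀ s t : ℝ, 0 ≤ s → s ≤ t → ζ s ≤ ζ t)
    (hζlt : ∀ t : ℝ, 0 < t → ζ t < t)
    (hR : ∀ p q : G, R p ≠ p → R q ≠ q →
      ‖R p - R q‖ ≤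
        ζ (‖p - q‖ ^ b * ‖p - R p‖ ^ a * ‖q - R q‖ ^ c *
          ((1 / 2) * (‖p - R q‖ + ‖q - R p‖)) ^ (1 - a - b - c)))
    (p : ℕ → G) (hp : ∀ m, p (m + 1) = R (p m))
    (hne : ∀ m, p m ≠ p (m + 1)) :
    ∀ m : ℕ, 1 ≤ m → ‖p (m + 1) - p m‖ < ‖p m - p (m - 1)‖ :=
  stmt_4_general R a b c ζ ha hb habc hζmono hζlt hR p hp hne
end

section
/- Let (G, ‖·‖) be a Banach space and R : G → G a mapping for which there exist a, b, c ∈ (0,1) with a+b+c < 1, M ∈ [0,1), k ∈ [0,∞), such that ‖k(p−q) + Rp − Rq‖ ≤ M · ‖(k+1)(p−q)‖^b ‖p−Rp‖^a ‖q−Rq‖^c ( (1/2)(‖(k+1)(p−q)+q−Rq‖ + ‖(k+1)(q−p)+p−Rp‖) )^{1−a−b−c} for all p, q not fixed points of R. Then R has a fixed point in G. -/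
/-!
The averaged map `T = (k + 1)⁻¹ • (k • id + R)` has the same fixed points as `R`, and since
`(k + 1) • (x - T y) = (k + 1) • (x - y) + y - R y`, the enriched condition on `R` is the
interpolative Hardy–Rogers inequality for `T` multiplied by `k + 1` (the exponents add up to `1`).
For that inequality the Picard steps `dₙ = dist xₙ xₙ₊₁` satisfy
`dₙ₊₁ ≤ M dₙ₊₁ ^ a max(dₙ, dₙ₊₁) ^ (1 - a)`, which rules out `dₙ < dₙ₊₁` and gives
`dₙ₊₁ ≤ M ^ (1 / (1 - a)) dₙ`. So the orbit is Cauchy, and the inequality at `(xₙ, s)` forces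
its limit `s` to be fixed.
-/

open Filter Topology

section InterpolativeHardyRogers

variable {X : Type*} [MetricSpace X]

def IsInterpolativeHardyRogers (T : X → X) (M a b c : ℝ) : Prop :=
  ∀ p q, T p ≠ p → T q ≠ q →
    dist (T p) (T q) ≤ M * (dist p q ^ b * dist p (T p) ^ a * dist q (T q) ^ c *
      ((dist p (T q) + dist q (T p)) / 2) ^ (1 - a - b - c))

lemma le_rpow_inv_mul_of_le_interpolative {M a b c d₀ d₁ e : ℝ} (hM : 0 ≤ M) (hM1 : M < 1)
    (ha1 : a < 1) (hb : 0 ≤ b) (hc : 0 ≤ c) (habc : a + b + c ≤ 1)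
    (hd₀ : 0 < d₀) (hd₁ : 0 < d₁) (he : 0 ≤ e) (he' : e ≤ max d₀ d₁)
    (h : d₁ ≤ M * (d₀ ^ b * d₁ ^ a * d₀ ^ c * e ^ (1 - a - b - c))) :
    d₁ ≤ M ^ (1 - a)⁻¹ * d₀ := by
  set m := max d₀ d₁
  have hm : 0 < m := lt_max_of_lt_left hd₀
  have hpow : m ^ b * m ^ c * m ^ (1 - a - b - c) = m ^ (1 - a) := by
    rw [← Real.rpow_add hm, ← Real.rpow_add hm]
    ring_nf
  have hbound : d₁ ^ (1 - a) * d₁ ^ a ≤ M * m ^ (1 - a) * d₁ ^ a :=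
    calc d₁ ^ (1 - a) * d₁ ^ a = d₁ := by rw [← Real.rpow_add hd₁]; norm_num
      _ ≤ M * (d₀ ^ b * d₁ ^ a * d₀ ^ c * e ^ (1 - a - b - c)) := h
      _ ≤ M * (m ^ b * d₁ ^ a * m ^ c * m ^ (1 - a - b - c)) := by
        gcongr
        · exact le_max_left _ _
        · exact le_max_left _ _
        · linarith
      _ = M * m ^ (1 - a) * d₁ ^ a := by rw [← hpow]; ring
  have key : d₁ ^ (1 - a) ≤ M * m ^ (1 - a) :=
    le_of_mul_le_mul_right hbound (Real.rpow_pos_of_pos hd₁ a)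
  have hm₀ : m = d₀ := by
    rcases max_choice d₀ d₁ with hmax | hmax
    · exact hmax
    · rw [show m = d₁ from hmax] at key
      nlinarith [Real.rpow_pos_of_pos hd₁ (1 - a)]
  rw [hm₀] at key
  have ha1' : 1 - a ≠ 0 := by linarith
  calc d₁ = (d₁ ^ (1 - a)) ^ (1 - a)⁻¹ := (Real.rpow_rpow_inv hd₁.le ha1').symm
    _ ≤ (M * d₀ ^ (1 - a)) ^ (1 - a)⁻¹ := by gcongr
    _ = M ^ (1 - a)⁻¹ * d₀ := by
      rw [Real.mul_rpow hM (by positivity), Real.rpow_rpow_inv hd₀.le ha1']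

namespace IsInterpolativeHardyRogers

variable {T : X → X} {M a b c : ℝ}

lemma dist_apply_apply_le (hT : IsInterpolativeHardyRogers T M a b c) (hM : 0 ≤ M)
    (hM1 : M < 1) (ha1 : a < 1) (hb : 0 ≤ b) (hc : 0 ≤ c) (habc : a + b + c ≤ 1) {x : X}
    (hx : T x ≠ x) (hTx : T (T x) ≠ T x) :
    dist (T x) (T (T x)) ≤ M ^ (1 - a)⁻¹ * dist x (T x) := by
  have h := hT (T x) x hTx hx
  rw [dist_comm (T (T x)), dist_comm (T x) x, dist_self, zero_add] at h
  refine le_rpow_inv_mul_of_le_interpolative hM hM1 ha1 hb hc habc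
    (dist_pos.2 hx.symm) (dist_pos.2 hTx.symm) (by positivity) ?_ h
  have := dist_triangle x (T x) (T (T x))
  have := le_max_left (dist x (T x)) (dist (T x) (T (T x)))
  have := le_max_right (dist x (T x)) (dist (T x) (T (T x)))
  linarith

lemma dist_iterate_succ_le (hT : IsInterpolativeHardyRogers T M a b c) (hM : 0 ≤ M)
    (hM1 : M < 1) (ha1 : a < 1) (hb : 0 ≤ b) (hc : 0 ≤ c) (habc : a + b + c ≤ 1) {x : X}
    (hfix : ∀ n, T (T^[n] x) ≠ T^[n] x) (n : ℕ) :
    dist (T^[n] x) (T^[n + 1] x) ≤ dist x (T x) * (M ^ (1 - a)⁻¹) ^ n := by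
  induction n with
  | zero => simp
  | succ n ih =>
    have hstep := hT.dist_apply_apply_le hM hM1 ha1 hb hc habc (hfix n)
      (by simpa only [Function.iterate_succ_apply'] using hfix (n + 1))
    simp only [Function.iterate_succ_apply'] at ih ⊢
    calc dist (T (T^[n] x)) (T (T (T^[n] x)))
        ≤ M ^ (1 - a)⁻¹ * dist (T^[n] x) (T (T^[n] x)) := hstep
      _ ≤ M ^ (1 - a)⁻¹ * (dist x (T x) * (M ^ (1 - a)⁻¹) ^ n) := by gcongr
      _ = dist x (T x) * (M ^ (1 - a)⁻¹) ^ (n + 1) := by ring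

lemma apply_eq_of_tendsto (hT : IsInterpolativeHardyRogers T M a b c) (ha : 0 < a)
    (hb : 0 ≤ b) (habc : a + b + c ≤ 1) {u : ℕ → X} {s : X}
    (hu : Tendsto u atTop (𝓝 s)) (hstep : ∀ n, u (n + 1) = T (u n))
    (hfix : ∀ n, T (u n) ≠ u n) : T s = s := by
  by_contra hs
  have hu' : Tendsto (fun n => u (n + 1)) atTop (𝓝 s) := hu.comp (tendsto_add_atTop_nat 1)
  have hbound : ∀ n, dist (u (n + 1)) (T s) ≤
      M * (dist (u n) s ^ b * dist (u n) (u (n + 1)) ^ a * dist s (T s) ^ c *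
        ((dist (u n) (T s) + dist s (u (n + 1))) / 2) ^ (1 - a - b - c)) := by
    intro n
    rw [hstep]
    exact hT (u n) s (hfix n) hs
  have hrhs : Tendsto (fun n => M * (dist (u n) s ^ b * dist (u n) (u (n + 1)) ^ a *
      dist s (T s) ^ c * ((dist (u n) (T s) + dist s (u (n + 1))) / 2) ^ (1 - a - b - c)))
      atTop (𝓝 0) := by
    have hTs := tendsto_const_nhds (x := T s) (f := (atTop : Filter ℕ))
    have hs' := tendsto_const_nhds (x := s) (f := (atTop : Filter ℕ))
    have := (((((hu.dist hs').rpow_const (Or.inr hb)).mul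
      ((hu.dist hu').rpow_const (Or.inr ha.le))).mul
      (tendsto_const_nhds (x := dist s (T s) ^ c))).mul
      ((((hu.dist hTs).add (hs'.dist hu')).div_const 2).rpow_const
        (p := 1 - a - b - c) (Or.inr (by linarith)))).const_mul M
    simpa [Real.zero_rpow ha.ne'] using this
  have hTs : Tendsto (fun n => u (n + 1)) atTop (𝓝 (T s)) :=
    tendsto_iff_dist_tendsto_zero.2 (squeeze_zero (fun _ => dist_nonneg) hbound hrhs)
  exact hs (tendsto_nhds_unique hTs hu')

theorem exists_fixedPoint [CompleteSpace X] [Nonempty X]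
    (hT : IsInterpolativeHardyRogers T M a b c) (hM : 0 ≤ M) (hM1 : M < 1) (ha : 0 < a)
    (ha1 : a < 1) (hb : 0 ≤ b) (hc : 0 ≤ c) (habc : a + b + c ≤ 1) : ∃ s, T s = s := by
  let x : X := Classical.arbitrary X
  by_cases hfix : ∃ n, T (T^[n] x) = T^[n] x
  · obtain ⟨n, hn⟩ := hfix
    exact ⟨_, hn⟩
  push Not at hfix
  have hcauchy : CauchySeq fun n => T^[n] x :=
    cauchySeq_of_le_geometric _ _ (Real.rpow_lt_one hM hM1 (inv_pos.2 (by linarith)))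
      (hT.dist_iterate_succ_le hM hM1 ha1 hb hc habc hfix)
  obtain ⟨s, hs⟩ := cauchySeq_tendsto_of_complete hcauchy
  exact ⟨s, hT.apply_eq_of_tendsto ha hb habc hs
    (fun n => Function.iterate_succ_apply' T n x) hfix⟩

end IsInterpolativeHardyRogers

end InterpolativeHardyRogers

lemma mul_rpow_interpolation {s x y z w : ℝ} (a b c : ℝ) (hs : 0 < s) (hx : 0 ≤ x) (hy : 0 ≤ y)
    (hz : 0 ≤ z) (hw : 0 ≤ w) :
    (s * x) ^ b * (s * y) ^ a * (s * z) ^ c * (s * w) ^ (1 - a - b - c) =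
      s * (x ^ b * y ^ a * z ^ c * w ^ (1 - a - b - c)) := by
  have hpow : s ^ b * s ^ a * s ^ c * s ^ (1 - a - b - c) = s := by
    rw [← Real.rpow_add hs, ← Real.rpow_add hs, ← Real.rpow_add hs]
    ring_nf
    exact Real.rpow_one s
  rw [Real.mul_rpow hs.le hx, Real.mul_rpow hs.le hy, Real.mul_rpow hs.le hz,
    Real.mul_rpow hs.le hw]
  nth_rewrite 5 [← hpow]
  ring

section AveragedMap

variable {E : Type*} [NormedAddCommGroup E] [NormedSpace ℝ E]

/-- The Krasnoselskij averaged map `(1 - λ) • id + λ • R` with `λ = (k + 1)⁻¹`. -/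
noncomputable def averagedMap (k : ℝ) (R : E → E) (p : E) : E := (k + 1)⁻¹ • (k • p + R p)

variable {k : ℝ} {R : E → E}

lemma smul_averagedMap (hk : k + 1 ≠ 0) (p : E) :
    (k + 1) • averagedMap k R p = k • p + R p :=
  smul_inv_smul₀ hk _

lemma smul_sub_averagedMap (hk : k + 1 ≠ 0) (x y : E) :
    (k + 1) • (x - averagedMap k R y) = (k + 1) • (x - y) + y - R y := by
  rw [smul_sub, smul_averagedMap hk]
  module

lemma averagedMap_eq_self_iff (hk : k + 1 ≠ 0) {p : E} : averagedMap k R p = p ↔ R p = p := by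
  have h := smul_sub_averagedMap (R := R) hk p p
  rw [sub_self, smul_zero, zero_add] at h
  rw [eq_comm, ← sub_eq_zero, ← smul_eq_zero_iff_right hk, h, sub_eq_zero, eq_comm]

lemma isInterpolativeHardyRogers_averagedMap {a b c M : ℝ} (hk : 0 ≤ k)
    (hR : ∀ p q : E, R p ≠ p → R q ≠ q →
      ‖k • (p - q) + R p - R q‖ ≤
        M * (‖(k + 1) • (p - q)‖ ^ b * ‖p - R p‖ ^ a * ‖q - R q‖ ^ c *
          ((1 / 2) * (‖(k + 1) • (p - q) + q - R q‖ + ‖(k + 1) • (q - p) + p - R p‖)) ^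
            (1 - a - b - c))) :
    IsInterpolativeHardyRogers (averagedMap k R) M a b c := by
  have hk1 : 0 < k + 1 := by linarith
  intro p q hp hq
  have H := hR p q (mt (averagedMap_eq_self_iff hk1.ne').2 hp)
    (mt (averagedMap_eq_self_iff hk1.ne').2 hq)
  have e₁ : k • (p - q) + R p - R q = (k + 1) • (averagedMap k R p - averagedMap k R q) := by
    rw [smul_sub (k + 1), smul_averagedMap hk1.ne', smul_averagedMap hk1.ne']
    module
  have e₂ : ∀ x : E, x - R x = (k + 1) • (x - averagedMap k R x) := fun x => by
    rw [smul_sub_averagedMap hk1.ne', sub_self, smul_zero, zero_add]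
  rw [e₁, e₂ p, e₂ q, ← smul_sub_averagedMap hk1.ne', ← smul_sub_averagedMap hk1.ne'] at H
  simp only [norm_smul, Real.norm_of_nonneg hk1.le, ← dist_eq_norm] at H
  rw [show ∀ x y : ℝ, 1 / 2 * ((k + 1) * x + (k + 1) * y) = (k + 1) * ((x + y) / 2) by
      intros; ring,
    mul_rpow_interpolation a b c hk1 dist_nonneg dist_nonneg dist_nonneg (by positivity),
    mul_left_comm] at H
  exact le_of_mul_le_mul_left H hk1

end AveragedMap

theorem stmt_8 {G : Type*} [NormedAddCommGroup G] [NormedSpace ℝ G] [CompleteSpace G]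
    (R : G → G) (a b c k M : ℝ)
    (ha : a ∈ Set.Ioo (0:ℝ) 1) (hb : b ∈ Set.Ioo (0:ℝ) 1) (hc : c ∈ Set.Ioo (0:ℝ) 1)
    (habc : a + b + c < 1) (hM : M ∈ Set.Ico (0:ℝ) 1) (hk : 0 ≤ k)
    (hR : ∀ p q : G, R p ≠ p → R q ≠ q →
      ‖k • (p - q) + R p - R q‖ ≤
        M * (‖(k + 1) • (p - q)‖ ^ b * ‖p - R p‖ ^ a * ‖q - R q‖ ^ c *
          ((1 / 2) * (‖(k + 1) • (p - q) + q - R q‖ + ‖(k + 1) • (q - p) + p - R p‖)) ^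
            (1 - a - b - c))) :
    ∃ s : G, R s = s := by
  obtain ⟨s, hs⟩ := (isInterpolativeHardyRogers_averagedMap hk hR).exists_fixedPoint
    hM.1 hM.2 ha.1 ha.2 hb.1.le hc.1.le habc.le
  exact ⟨s, (averagedMap_eq_self_iff (by linarith)).1 hs⟩
end
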